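/- Let ℓ ∈ ℕ_0 and let P = (({v_{i-1},v_i},t_i))_{i=1}^k be a δ-restless temporal s-z path in a temporal graph G of length k ≤ d(s,1) + ℓ (with the conventions t_0 := 1 and t_{k+1} := t_k). Then for every i ∈ [0,k] there exists j ∈ [0,2ℓ] with i + j ≤ k such that v_{i+j} is a distance separator of P. -/

import Mathlib

attribute [local instance] Classical.propDecidable

noncomputable section

/-- A temporal graph: a lifetime `tau` and, for each time step, a set of
undirected edges (unordered pairs of distinct vertices) over `V`;
edges exist only at time steps in `[1, tau]`. -/
structure TemporalGraph (V : Type*) where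
  tau : ℕ
  E : ℕ → Sym2 V → Prop
  time_mem : ∀ t e, E t e → 1 ≤ t ∧ t ≤ tau
  not_diag : ∀ t e, E t e → ¬ e.IsDiag

namespace TemporalGraph

variable {V : Type*}

/-- `G.IsPath s z m vs ts` : the sequence `(({vs (i-1), vs i}, ts i))_{i=1}^m` is a
temporal `s`-`z` path of length `m` in `G` (pairwise distinct vertices
`vs 0 = s, vs 1, …, vs m = z` and nondecreasing time stamps). -/
def IsPath (G : TemporalGraph V) (s z : V) (m : ℕ) (vs : ℕ → V) (ts : ℕ → ℕ) : Prop :=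
  vs 0 = s ∧ vs m = z ∧
  (∀ i j, i ≤ m → j ≤ m → i ≠ j → vs i ≠ vs j) ∧
  (∀ i, 1 ≤ i → i ≤ m → G.E (ts i) s(vs (i - 1), vs i)) ∧
  (∀ i, 1 ≤ i → i + 1 ≤ m → ts i ≤ ts (i + 1))

/-- `δ`-restless temporal path: consecutive time-edges are at most `δ` time steps apart. -/
def IsRestlessPath (G : TemporalGraph V) (δ : ℕ) (s z : V) (m : ℕ) (vs : ℕ → V)
    (ts : ℕ → ℕ) : Prop :=
  G.IsPath s z m vs ts ∧ ∀ i, 1 ≤ i → i + 1 ≤ m → ts (i + 1) ≤ ts i + δ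

/-- temporal `s`-`z` walk (vertices may repeat). -/
def IsWalk (G : TemporalGraph V) (s z : V) (m : ℕ) (vs : ℕ → V) (ts : ℕ → ℕ) : Prop :=
  vs 0 = s ∧ vs m = z ∧
  (∀ i, 1 ≤ i → i ≤ m → G.E (ts i) s(vs (i - 1), vs i)) ∧
  (∀ i, 1 ≤ i → i + 1 ≤ m → ts i ≤ ts (i + 1))

/-- `δ`-restless temporal walk. -/
def IsRestlessWalk (G : TemporalGraph V) (δ : ℕ) (s z : V) (m : ℕ) (vs : ℕ → V)
    (ts : ℕ → ℕ) : Prop :=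
  G.IsWalk s z m vs ts ∧ ∀ i, 1 ≤ i → i + 1 ≤ m → ts (i + 1) ≤ ts i + δ

/-- `G.dist z v t` : the minimum length of a temporal `v`-`z` path in `G` whose
departure time is at least `t`; `⊤` if no such path exists, and `0` for `v = z`. -/
def dist (G : TemporalGraph V) (z v : V) (t : ℕ) : ℕ∞ :=
  if v = z then 0
  else sInf {x : ℕ∞ | ∃ (m : ℕ) (vs : ℕ → V) (ts : ℕ → ℕ),
    G.IsPath v z m vs ts ∧ t ≤ ts 1 ∧ x = (m : ℕ∞)}

/-- The set `A_{a,t}^{b,t'}` of vertex appearances. -/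
def AreaAB (G : TemporalGraph V) (z a : V) (t : ℕ) (b : V) (t' : ℕ) : Set (V × ℕ) :=
  {w | G.dist z b t' < G.dist z w.1 w.2 ∧ G.dist z w.1 w.2 < G.dist z a t ∧
       t ≤ w.2 ∧ w.2 ≤ t'}

/-- The set `A^{b,t'}` of vertex appearances. -/
def AreaB (G : TemporalGraph V) (z b : V) (t' : ℕ) : Set (V × ℕ) :=
  {w | G.dist z b t' < G.dist z w.1 w.2 ∧ G.dist z w.1 w.2 < ⊤ ∧ w.2 ≤ t'}

/-- The temporal graph `G_{a,t}^{b,t'}`. -/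
def SubAB (G : TemporalGraph V) (z : V) (δ : ℕ) (a : V) (t : ℕ) (b : V) (t' : ℕ) :
    TemporalGraph V where
  tau := G.tau
  E := fun u e =>
    (G.E u e ∧ ∃ x y, e = s(x, y) ∧ (x, u) ∈ G.AreaAB z a t b t' ∧
        (y, u) ∈ G.AreaAB z a t b t') ∨
    (G.E u e ∧ u = t ∧ ∃ x, e = s(a, x) ∧ (x, t) ∈ G.AreaAB z a t b t') ∨
    (G.E u e ∧ t' ≤ u + δ ∧ ∃ x, e = s(x, b) ∧
        ((x, u) ∈ G.AreaAB z a t b t' ∨ (x = a ∧ u = t)))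
  time_mem := by rintro u e (⟨h, -⟩ | ⟨h, -⟩ | ⟨h, -⟩) <;> exact G.time_mem u e h
  not_diag := by rintro u e (⟨h, -⟩ | ⟨h, -⟩ | ⟨h, -⟩) <;> exact G.not_diag u e h

/-- The temporal graph `G^{b,t'}`. -/
def SubB (G : TemporalGraph V) (z : V) (δ : ℕ) (b : V) (t' : ℕ) : TemporalGraph V where
  tau := G.tau
  E := fun u e =>
    (G.E u e ∧ ∃ x y, e = s(x, y) ∧ (x, u) ∈ G.AreaB z b t' ∧ (y, u) ∈ G.AreaB z b t') ∨
    (G.E u e ∧ t' ≤ u + δ ∧ ∃ x, e = s(x, b) ∧ (x, u) ∈ G.AreaB z b t')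
  time_mem := by rintro u e (⟨h, -⟩ | ⟨h, -⟩) <;> exact G.time_mem u e h
  not_diag := by rintro u e (⟨h, -⟩ | ⟨h, -⟩) <;> exact G.not_diag u e h

/-- The vertex set of a temporal graph: all endpoints of its time-edges. -/
def vertexSet (G : TemporalGraph V) : Set V := {x | ∃ u e, G.E u e ∧ x ∈ e}

/-- Minimum length of a `δ`-restless temporal `a`-`b` path in `G` (`⊤` if none). -/
def restlessDist (G : TemporalGraph V) (δ : ℕ) (a b : V) : ℕ∞ :=
  sInf {x : ℕ∞ | ∃ m vs ts, G.IsRestlessPath δ a b m vs ts ∧ x = (m : ℕ∞)}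

/-- The base case of the table `T`: the value `T[u,t']` when `d(s,1) - d(u,t') ≤ ℓ`. -/
def tableBase (G : TemporalGraph V) (s z : V) (δ ℓ : ℕ) (u : V) (t' : ℕ) : ℕ∞ :=
  if u = s then 0
  else if 1 ≤ restlessDist (G.SubB z δ u t') δ s u ∧
          restlessDist (G.SubB z δ u t') δ s u ≤ (2 * ℓ : ℕ)
    then restlessDist (G.SubB z δ u t') δ s u
    else ⊤

/-- Fuelled version of the recursively defined table `T` (the fuel is an upper
bound on the recursion depth, which strictly decreases along the recursion of
the table via `d(s,1) - d(·,·)`). -/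
def tableFuel (G : TemporalGraph V) (s z : V) (δ ℓ : ℕ) : ℕ → V → ℕ → ℕ∞
  | 0, u, t' => tableBase G s z δ ℓ u t'
  | n + 1, u, t' =>
    if G.dist z s 1 - G.dist z u t' ≤ (ℓ : ℕ∞) then tableBase G s z δ ℓ u t'
    else sInf (insert ⊤ {x : ℕ∞ | ∃ (v : V) (t ℓ' : ℕ),
      1 ≤ t ∧ t ≤ t' ∧ (∃ e, G.E t e ∧ v ∈ e) ∧
      G.dist z u t' < G.dist z v t ∧ G.dist z v t ≤ G.dist z u t' + (ℓ : ℕ∞) + 1 ∧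
      1 ≤ ℓ' ∧ ℓ' ≤ 2 * ℓ + 1 ∧
      restlessDist (G.SubAB z δ v t u t') δ v u = (ℓ' : ℕ∞) ∧
      x = tableFuel G s z δ ℓ n v t + (ℓ' : ℕ∞)})

/-- The table `T` of the dynamic program, for the instance `(G,s,z,δ,k)`
(with `ℓ := k - d(s,1)`). -/
def table (G : TemporalGraph V) (s z : V) (δ k : ℕ) (u : V) (t' : ℕ) : ℕ∞ :=
  tableFuel G s z δ (k - (G.dist z s 1).toNat) ((G.dist z s 1).toNat + 1) u t'

/-- `vs i` is a distance separator of the temporal `s`-`z` path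
`(({vs (i-1), vs i}, ts i))_{i=1}^k` (with the convention `ts (k+1) = ts k`). -/
def IsDistSep (G : TemporalGraph V) (z : V) (k : ℕ) (vs : ℕ → V) (ts : ℕ → ℕ)
    (i : ℕ) : Prop :=
  (∀ j, j < i → G.dist z (vs i) (ts (i + 1)) < G.dist z (vs j) (ts (j + 1))) ∧
  (∀ j, i < j → j ≤ k → G.dist z (vs j) (ts (j + 1)) < G.dist z (vs i) (ts (i + 1)))

/-- The underlying (static) graph of a temporal graph. -/
def underlying (G : TemporalGraph V) : SimpleGraph V where
  Adj x y := ∃ t, G.E t s(x, y)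
  symm := by
    constructor
    rintro x y ⟨t, h⟩
    exact ⟨t, by rwa [Sym2.eq_swap]⟩
  loopless := by
    constructor
    rintro x ⟨t, h⟩
    exact G.not_diag t _ h (by simp)

/-- The set of non-isolated vertex appearances of `G`. -/
def NonIsolated (G : TemporalGraph V) : Set (V × ℕ) := {p | ∃ e, G.E p.2 e ∧ p.1 ∈ e}

/-- The weighted arcs of the auxiliary directed graph `D` (for destination `z`):
`DArc G z x y w` means there is an arc from `x` to `y` of weight `w`.
`Sum.inl ()` is the special vertex `z` of `D`; `Sum.inr (v, t)` is the vertex `v_t`. -/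
def DArc (G : TemporalGraph V) (z : V) : Unit ⊕ V × ℕ → Unit ⊕ V × ℕ → ℕ → Prop
  | Sum.inr (v, ta), Sum.inr (u, tb), w =>
      (w = 1 ∧ ta = tb ∧ v ≠ u ∧ G.E ta s(v, u)) ∨
      (w = 0 ∧ v = u ∧ (v, ta) ∈ G.NonIsolated ∧ (v, tb) ∈ G.NonIsolated ∧ tb < ta ∧
        ∀ t'', tb < t'' → t'' < ta → (v, t'') ∉ G.NonIsolated)
  | Sum.inl _, Sum.inr (u, tb), w =>
      w = 0 ∧ u = z ∧ (z, tb) ∈ G.NonIsolated ∧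
        ∀ t'', (z, t'') ∈ G.NonIsolated → t'' ≤ tb
  | _, _, _ => False

/-- The minimum total arc weight of a directed path in `D` from the special
vertex `z` to the vertex `v_t` (`⊤` if `v_t` is not reachable from `z`). -/
def dMinWeight (G : TemporalGraph V) (z v : V) (t : ℕ) : ℕ∞ :=
  sInf {x : ℕ∞ | ∃ (n : ℕ) (w : ℕ → Unit ⊕ V × ℕ) (wt : ℕ → ℕ),
    w 0 = Sum.inl () ∧ w n = Sum.inr (v, t) ∧
    (∀ i j, i ≤ n → j ≤ n → i ≠ j → w i ≠ w j) ∧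
    (∀ i, i < n → DArc G z (w i) (w (i + 1)) (wt i)) ∧
    x = ∑ i ∈ Finset.range n, (wt i : ℕ∞)}

end TemporalGraph

open TemporalGraph

open Finset

/-!
Write `d j` for `d(v_j, t_{j+1})`. Along the path, `d k = 0`, `d j ≠ 0` for `j < k`, and
`d j ≤ d (j + 1) + 1`: a shortest path from `v_{j+1}` either already passes through `v_j`, and
its tail is short, or the time-edge `({v_j, v_{j+1}}, t_{j+1})` can be prepended to it.
A sequence that drops by at most one per step has at most `k - d 0 ≤ ℓ` indices that are not
strict prefix minima, and at most `k - d 0` that are not strict suffix maxima (both are counts of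
non-records, the second of the reversed sequence). So at most `2ℓ` indices of `[0, k]` are not
separators; since `k` itself is one, every window `[i, i + 2ℓ]` contains a separator.
-/

def IsRecord {α : Type*} [LT α] (g : ℕ → α) (j : ℕ) : Prop :=
  ∀ i < j, g i < g j

def IsSeparator {α : Type*} [LT α] (D : ℕ → α) (k m : ℕ) : Prop :=
  (∀ j < m, D m < D j) ∧ ∀ j, m < j → j ≤ k → D j < D m

theorem card_not_isRecord_add_le {g : ℕ → ℤ} {n : ℕ} (hg : ∀ j < n, g (j + 1) ≤ g j + 1)
    {j : ℕ} (hj : j ≤ n) : (#{i ∈ range (n + 1) | ¬ IsRecord g i} : ℤ) + g j ≤ n + g 0 := by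
  induction n generalizing j with
  | zero =>
    obtain rfl : j = 0 := by omega
    have hrec : IsRecord g 0 := fun i hi => absurd hi (Nat.not_lt_zero i)
    simp [hrec]
  | succ n ih =>
    replace ih := fun j (hj : j ≤ n) => ih (fun i hi => hg i (by omega)) hj
    rw [range_add_one, filter_insert]
    by_cases hrec : IsRecord g (n + 1)
    · rw [if_neg (not_not_intro hrec)]
      push_cast
      rcases Nat.lt_or_ge j (n + 1) with hjn | hjn
      · linarith [ih j (by omega)]
      · obtain rfl : j = n + 1 := by omega
        linarith [ih n le_rfl, hg n (by omega)]
    · rw [if_pos hrec, card_insert_of_notMem (by simp)]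
      push_cast
      rcases Nat.lt_or_ge j (n + 1) with hjn | hjn
      · linarith [ih j (by omega)]
      · obtain rfl : j = n + 1 := by omega
        obtain ⟨i, hi, hgi⟩ : ∃ i < n + 1, g (n + 1) ≤ g i := by
          simpa [IsRecord] using hrec
        linarith [ih i (by omega)]

theorem card_not_isSeparator_le {D : ℕ → ℤ} {k : ℕ} (hD : ∀ j < k, D j ≤ D (j + 1) + 1) :
    (#{m ∈ range (k + 1) | ¬ IsSeparator D k m} : ℤ) ≤ 2 * (k + D k - D 0) := by
  set A := {m ∈ range (k + 1) | ¬ IsRecord (-D) m}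
  set B := {j ∈ range (k + 1) | ¬ IsRecord (fun j => D (k - j)) j}
  have hA : (#A : ℤ) + -D k ≤ k + -D 0 :=
    card_not_isRecord_add_le (fun j hj => by simp only [Pi.neg_apply]; linarith [hD j hj]) le_rfl
  have hB : (#B : ℤ) + D 0 ≤ k + D k := by
    have hstep : ∀ j < k, D (k - (j + 1)) ≤ D (k - j) + 1 := fun j hj => by
      simpa [show k - (j + 1) + 1 = k - j by omega] using hD (k - (j + 1)) (by omega)
    simpa using card_not_isRecord_add_le hstep le_rfl
  -- `m` is a strict prefix minimum iff it is a record of `-D`, and a strict suffix maximum iff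
  -- `k - m` is a record of the reversed sequence
  have hsub : {m ∈ range (k + 1) | ¬ IsSeparator D k m} ⊆ A ∪ B.image (k - ·) := by
    intro m hm
    simp only [mem_filter, mem_range, IsSeparator, not_and_or, not_forall, not_lt] at hm
    obtain ⟨hmk, ⟨j, hjm, hj⟩ | ⟨j, hmj, hjk, hj⟩⟩ := hm
    · refine mem_union_left _ (mem_filter.2 ⟨mem_range.2 hmk, fun hrec => ?_⟩)
      have := hrec j hjm
      simp only [Pi.neg_apply, neg_lt_neg_iff] at this
      linarith
    · refine mem_union_right _ (mem_image.2 ⟨k - m, mem_filter.2 ⟨by simp, ?_⟩, by omega⟩)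
      intro hrec
      have := hrec (k - j) (by omega)
      simp only [show k - (k - j) = j by omega, show k - (k - m) = m by omega] at this
      linarith
  have hcard : (#{m ∈ range (k + 1) | ¬ IsSeparator D k m} : ℤ) ≤ #A + #B := by
    exact_mod_cast (card_le_card hsub).trans
      ((card_union_le _ _).trans (Nat.add_le_add_left card_image_le _))
  linarith

theorem Int.exists_isSeparator_mem_Icc {D : ℕ → ℤ} {k ℓ : ℕ}
    (hD : ∀ j < k, D j ≤ D (j + 1) + 1)
    (hlast_lt : ∀ j < k, D k < D j) (hlen : k + D k ≤ D 0 + ℓ) {i : ℕ} (hi : i ≤ k) :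
    ∃ m ∈ Icc i (i + 2 * ℓ), m ≤ k ∧ IsSeparator D k m := by
  rcases le_or_gt k (i + 2 * ℓ) with hk | hk
  · exact ⟨k, mem_Icc.2 ⟨hi, hk⟩, le_rfl, hlast_lt, fun j hkj hjk => absurd hkj (by omega)⟩
  · have hcard : #{m ∈ Finset.range (k + 1) | ¬ IsSeparator D k m} < #(Icc i (i + 2 * ℓ)) := by
      have := card_not_isSeparator_le hD
      simp only [Nat.card_Icc]
      omega
    obtain ⟨m, hm, hsep⟩ := exists_mem_notMem_of_card_lt_card hcard
    have hmk : m ≤ k := by simp at hm; omega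
    exact ⟨m, hm, hmk, by simpa [hmk, Nat.lt_succ_iff] using hsep⟩

theorem ENat.exists_isSeparator_mem_Icc {d : ℕ → ℕ∞} {k ℓ : ℕ}
    (hd : ∀ j < k, d j ≤ d (j + 1) + 1) (hlast : d k = 0) (hpos : ∀ j < k, d j ≠ 0)
    (hlen : (k : ℕ∞) ≤ d 0 + ℓ) {i : ℕ} (hi : i ≤ k) :
    ∃ m ∈ Icc i (i + 2 * ℓ), m ≤ k ∧ IsSeparator d k m := by
  have hbound : ∀ r ≤ k, d (k - r) ≤ r := by
    intro r
    induction r with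
    | zero => simp [hlast]
    | succ r ih =>
      intro hr
      calc d (k - (r + 1)) ≤ d (k - (r + 1) + 1) + 1 := hd _ (by omega)
        _ = d (k - r) + 1 := by rw [show k - (r + 1) + 1 = k - r by omega]
        _ ≤ (r + 1 : ℕ) := by push_cast; gcongr; exact ih (by omega)
  have hcast : ∀ j ≤ k, ((d j).toNat : ℕ∞) = d j := fun j hj =>
    ENat.natCast_toNat <| ne_top_of_le_ne_top (ENat.natCast_ne_top (k - j)) <| by
      simpa [Nat.sub_sub_self hj] using hbound (k - j) (by omega)
  set D : ℕ → ℤ := fun j => (d j).toNat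
  have hlt : ∀ a ≤ k, ∀ b ≤ k, D a < D b ↔ d a < d b := by
    intro a ha b hb
    rw [← hcast a ha, ← hcast b hb]
    simp [D]
  have hD : ∀ j < k, D j ≤ D (j + 1) + 1 := by
    intro j hj
    have := hd j hj
    rw [← hcast j hj.le, ← hcast (j + 1) hj] at this
    simp only [D]
    exact_mod_cast this
  have hDlast : ∀ j < k, D k < D j := by
    intro j hj
    rw [hlt k le_rfl j hj.le, hlast]
    exact pos_iff_ne_zero.2 (hpos j hj)
  have hDlen : k + D k ≤ D 0 + ℓ := by
    rw [← hcast 0 (Nat.zero_le k)] at hlen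
    simp only [D, hlast]
    exact_mod_cast hlen
  obtain ⟨m, hm, hmk, hleft, hright⟩ := Int.exists_isSeparator_mem_Icc hD hDlast hDlen hi
  exact ⟨m, hm, hmk, fun j hj => (hlt m hmk j (by omega)).1 (hleft j hj),
    fun j hmj hjk => (hlt j hjk m hmk).1 (hright j hmj hjk)⟩

namespace TemporalGraph

variable {V : Type*} {G : TemporalGraph V} {s z : V} {m : ℕ} {vs : ℕ → V} {ts : ℕ → ℕ}

theorem IsPath.time_mono (h : G.IsPath s z m vs ts) {a b : ℕ} (ha : 1 ≤ a) (hab : a ≤ b)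
    (hb : b ≤ m) : ts a ≤ ts b := by
  induction b, hab using Nat.le_induction with
  | base => rfl
  | succ b hab ih => exact (ih (by omega)).trans (h.2.2.2.2 b (by omega) hb)

theorem IsPath.drop (h : G.IsPath s z m vs ts) {p : ℕ} (hp : p ≤ m) :
    G.IsPath (vs p) z (m - p) (fun a => vs (p + a)) (fun a => ts (p + a)) := by
  obtain ⟨-, hz, hinj, hedge, hmono⟩ := h
  refine ⟨rfl, by simpa [Nat.add_sub_cancel' hp] using hz,
    fun a b ha hb hab => hinj _ _ (by omega) (by omega) (by omega), fun a ha₁ ha₂ => ?_,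
    fun a ha₁ ha₂ => hmono _ (by omega) (by omega)⟩
  simpa [show p + a - 1 = p + (a - 1) by omega] using hedge (p + a) (by omega) (by omega)

theorem IsPath.cons (h : G.IsPath s z m vs ts) {u : V} {t : ℕ} (hu : ∀ i ≤ m, vs i ≠ u)
    (he : G.E t s(u, s)) (ht : t ≤ ts 1) :
    G.IsPath u z (m + 1) (fun a => if a = 0 then u else vs (a - 1))
      (fun a => if a ≤ 1 then t else ts (a - 1)) := by
  obtain ⟨hs, hz, hinj, hedge, hmono⟩ := h
  refine ⟨rfl, by simpa using hz, ?_, ?_, ?_⟩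
  · rintro (_ | a) (_ | b) ha hb hab
    · exact absurd rfl hab
    · simpa using (hu b (by omega)).symm
    · simpa using hu a (by omega)
    · simpa using hinj a b (by omega) (by omega) (by omega)
  · rintro (_ | _ | a) ha₁ ha₂
    · omega
    · simpa [hs] using he
    · simpa using hedge (a + 1) (by omega) (by omega)
  · rintro (_ | _ | a) ha₁ ha₂
    · omega
    · simpa using ht
    · simpa using hmono (a + 1) (by omega) (by omega)

theorem dist_le_of_isPath {v : V} {t : ℕ} (hp : G.IsPath v z m vs ts) (ht : t ≤ ts 1) :
    G.dist z v t ≤ m := by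
  unfold dist
  split_ifs
  · exact zero_le
  · exact sInf_le ⟨m, vs, ts, hp, ht, rfl⟩

theorem dist_mono (z v : V) : Monotone (G.dist z v) := by
  intro t t' htt'
  unfold dist
  split_ifs
  · exact le_rfl
  · refine sInf_le_sInf ?_
    rintro x ⟨m, vs, ts, hp, ht, rfl⟩
    exact ⟨m, vs, ts, hp, htt'.trans ht, rfl⟩

theorem dist_ne_zero {v : V} {t : ℕ} (hvz : v ≠ z) : G.dist z v t ≠ 0 := by
  rw [dist, if_neg hvz, ← Order.one_le_iff_ne_zero]
  refine le_sInf ?_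
  rintro x ⟨m, vs, ts, hp, -, rfl⟩
  have hm : m ≠ 0 := by
    rintro rfl
    exact hvz (hp.1.symm.trans hp.2.1)
  exact_mod_cast Nat.one_le_iff_ne_zero.2 hm

theorem exists_isPath_dist_eq {v : V} {t : ℕ} (h : G.dist z v t ≠ ⊤) :
    ∃ m vs ts, G.IsPath v z m vs ts ∧ t ≤ ts 1 ∧ G.dist z v t = m := by
  by_cases hvz : v = z
  · subst hvz
    refine ⟨0, fun _ => v, fun _ => t, ⟨rfl, rfl, ?_, ?_, ?_⟩, le_rfl, by simp [dist]⟩ <;> omega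
  · rw [dist, if_neg hvz] at h ⊢
    have hne : {x : ℕ∞ | ∃ m vs ts, G.IsPath v z m vs ts ∧ t ≤ ts 1 ∧ x = m}.Nonempty :=
      Set.nonempty_iff_ne_empty.2 fun he => h (by rw [he, sInf_empty])
    obtain ⟨m, vs, ts, hp, ht, hm⟩ := csInf_mem hne
    exact ⟨m, vs, ts, hp, ht, hm⟩

theorem dist_le_dist_add_one {u v : V} {t t' : ℕ} (he : G.E t s(u, v)) (htt' : t ≤ t') :
    G.dist z u t ≤ G.dist z v t' + 1 := by
  by_cases htop : G.dist z v t' = ⊤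
  · simp [htop]
  obtain ⟨n, us, σ, hp, hσ, hdist⟩ := exists_isPath_dist_eq htop
  rw [hdist]
  by_cases hmem : ∃ p ≤ n, us p = u
  · obtain ⟨p, hpn, rfl⟩ := hmem
    rcases hpn.lt_or_eq with hpn | rfl
    · have hdep : t ≤ σ (p + 1) := htt'.trans (hσ.trans (hp.time_mono le_rfl (by omega) hpn))
      calc G.dist z (us p) t ≤ (n - p : ℕ) := dist_le_of_isPath (hp.drop hpn.le) hdep
        _ ≤ n + 1 := by exact_mod_cast (by omega : n - p ≤ n + 1)
    · simp [hp.2.1, dist]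
  · push Not at hmem
    have hcons := hp.cons hmem (hp.1 ▸ he) (htt'.trans hσ)
    exact_mod_cast dist_le_of_isPath hcons (by simp)

end TemporalGraph

theorem statement3_general {V : Type*} (G : TemporalGraph V) (z s : V) (δ : ℕ)
    (ℓ k : ℕ) (vs : ℕ → V) (ts : ℕ → ℕ)
    (hP : G.IsRestlessPath δ s z k vs ts)
    (hconv : ts (k + 1) = ts k)
    (hk : (k : ℕ∞) ≤ G.dist z s 1 + (ℓ : ℕ∞)) :
    ∀ i ≤ k, ∃ j ≤ 2 * ℓ, i + j ≤ k ∧ G.IsDistSep z k vs ts (i + j) := by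
  obtain ⟨⟨hs, hz, hinj, hedge, hmono⟩, -⟩ := hP
  set d : ℕ → ℕ∞ := fun j => G.dist z (vs j) (ts (j + 1))
  have htime : ∀ j < k, ts (j + 1) ≤ ts (j + 2) := fun j hj => by
    rcases (Nat.succ_le_of_lt hj).lt_or_eq with h | h
    · exact hmono (j + 1) (by omega) h
    · subst h
      exact hconv.ge
  have hstep : ∀ j < k, d j ≤ d (j + 1) + 1 := fun j hj =>
    dist_le_dist_add_one (by simpa using hedge (j + 1) (by omega) hj) (htime j hj)
  have hlast : d k = 0 := by simp [d, TemporalGraph.dist, hz]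
  have hpos : ∀ j < k, d j ≠ 0 := fun j hj =>
    dist_ne_zero (hz ▸ hinj j k (by omega) le_rfl (by omega))
  have hlen : (k : ℕ∞) ≤ d 0 + ℓ := by
    rcases Nat.eq_zero_or_pos k with rfl | hk₀
    · simp
    · have hdep : 1 ≤ ts 1 := (G.time_mem _ _ (hedge 1 le_rfl hk₀)).1
      have hs₀ : G.dist z s 1 ≤ d 0 := by simpa [d, hs] using dist_mono (G := G) z s hdep
      exact hk.trans (by gcongr)
  intro i hi
  obtain ⟨m, hm, hmk, hsep⟩ := ENat.exists_isSeparator_mem_Icc hstep hlast hpos hlen hi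
  rw [mem_Icc] at hm
  -- `G.IsDistSep z k vs ts` unfolds to `IsSeparator d k`
  exact ⟨m - i, by omega, by omega, by rwa [Nat.add_sub_cancel' hm.1]⟩

/-- A `δ`-restless temporal `s`-`z` path of length
`k ≤ d(s,1) + ℓ` visits a distance separator at least every `2ℓ+1` vertices:
for every `i ∈ [0,k]` there is `j ∈ [0,2ℓ]` with `i + j ≤ k` such that
`v_{i+j}` is a distance separator. -/
theorem statement3 {V : Type*} (G : TemporalGraph V) (z s : V) (δ : ℕ) (hδ : 1 ≤ δ)
    (ℓ k : ℕ) (vs : ℕ → V) (ts : ℕ → ℕ)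
    (hP : G.IsRestlessPath δ s z k vs ts)
    (h0 : ts 0 = 1) (hconv : ts (k + 1) = ts k)
    (hk : (k : ℕ∞) ≤ G.dist z s 1 + (ℓ : ℕ∞)) :
    ∀ i ≤ k, ∃ j ≤ 2 * ℓ, i + j ≤ k ∧ G.IsDistSep z k vs ts (i + j) :=
  statement3_general G z s δ ℓ k vs ts hP hconv hk
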